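/- arXiv:1405.6625 — 4 statements merged into one kernel-verified Lean document; each statement's English description precedes it below -/
import Mathlib

section
/- Let γ > 0 and W(x) = (x−1)²(x+1)². Every twice continuously differentiable solution Ψ : ℝ → ℝ of the ordinary differential equation W'(Ψ) − γ Ψ'' = 0 on ℝ satisfying Ψ'(z) → 0 as z → ±∞ and Ψ(z) → ±1 as z → ±∞ is given by Ψ(z) = Ψ̄(z − z̄) for some z̄ ∈ ℝ, where Ψ̄(z) = tanh(√(2/γ)·z) is the unique monotonically increasing solution with Ψ̄(0) = 0. -/
/-!
Multiplying the equation by `Ψ'` shows that the energy `γ/2 Ψ'² - W(Ψ)` is constant, and the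
behaviour at `+∞` makes it zero, so `Ψ'² = (2/γ) (1 - Ψ²)²`. Then `Ψ ∓ 1` satisfies a linear
Grönwall inequality, so `Ψ` never reaches the equilibria `±1`; hence `|Ψ| < 1`, `Ψ'` never
vanishes, and since `Ψ` climbs from `-1` to `1`, `Ψ' = √(2/γ) (1 - Ψ²)`. This is the equation
solved by `tanh (√(2/γ) (z - z̄))`, and choosing `z̄` with `Ψ z̄ = 0`, Grönwall's inequality
once more shows that the two solutions coincide.
-/

open Filter Real Set Topology

section Gronwall

variable {E : Type*} [NormedAddCommGroup E] [NormedSpace ℝ E] {f f' : ℝ → E} {g : ℝ → ℝ}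

theorem eq_zero_of_le_of_norm_deriv_le_mul_norm (hf : ∀ x, HasDerivAt f (f' x) x)
    (hg : Continuous g) (bound : ∀ x, ‖f' x‖ ≤ g x * ‖f x‖) {x₀ x : ℝ} (h₀ : f x₀ = 0)
    (hx : x₀ ≤ x) : f x = 0 := by
  obtain ⟨K, hK⟩ := isCompact_Icc.exists_bound_of_continuousOn (hg.continuousOn (s := Icc x₀ x))
  refine eq_zero_of_abs_deriv_le_mul_abs_self_of_eq_zero_right (K := K)
    (fun y _ => (hf y).continuousAt.continuousWithinAt) (fun y _ => (hf y).hasDerivWithinAt)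
    h₀ (fun y hy => ?_) x (right_mem_Icc.mpr hx)
  calc ‖f' y‖ ≤ g y * ‖f y‖ := bound y
    _ ≤ K * ‖f y‖ := by
      gcongr
      exact (le_abs_self _).trans (hK y (Ico_subset_Icc_self hy))

theorem eq_zero_of_norm_deriv_le_mul_norm (hf : ∀ x, HasDerivAt f (f' x) x)
    (hg : Continuous g) (bound : ∀ x, ‖f' x‖ ≤ g x * ‖f x‖) {x₀ : ℝ} (h₀ : f x₀ = 0) :
    f = 0 := by
  funext x
  rcases le_total x₀ x with hx | hx
  · exact eq_zero_of_le_of_norm_deriv_le_mul_norm hf hg bound h₀ hx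
  · have hf_neg : ∀ y, HasDerivAt (fun y => f (-y)) ((-1 : ℝ) • f' (-y)) y :=
      fun y => (hf (-y)).scomp y (hasDerivAt_neg y)
    simpa using eq_zero_of_le_of_norm_deriv_le_mul_norm hf_neg (hg.comp continuous_neg)
      (fun y => by simpa using bound (-y)) (x₀ := -x₀) (x := -x) (by simpa using h₀)
      (neg_le_neg hx)

end Gronwall

noncomputable def energy (γ : ℝ) (W Ψ : ℝ → ℝ) (z : ℝ) : ℝ :=
  γ / 2 * deriv Ψ z ^ 2 - W (Ψ z)

theorem hasDerivAt_energy {γ : ℝ} {W Ψ : ℝ → ℝ} (hW : Differentiable ℝ W)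
    (hΨ : ContDiff ℝ 2 Ψ) (heq : ∀ z, deriv W (Ψ z) = γ * deriv (deriv Ψ) z) (z : ℝ) :
    HasDerivAt (energy γ W Ψ) 0 z := by
  have hΨ' := ((hΨ.differentiable two_ne_zero) z).hasDerivAt
  have hΨ'' := (hΨ.differentiable_deriv_two z).hasDerivAt
  refine (((hΨ''.pow 2).const_mul (γ / 2)).sub ((hW (Ψ z)).hasDerivAt.comp z hΨ')).congr_deriv ?_
  rw [heq]
  push_cast
  ring

theorem energy_eq_of_tendsto {γ a : ℝ} {W Ψ : ℝ → ℝ} (hW : Differentiable ℝ W)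
    (hΨ : ContDiff ℝ 2 Ψ) (heq : ∀ z, deriv W (Ψ z) = γ * deriv (deriv Ψ) z)
    (hd : Tendsto (deriv Ψ) atTop (𝓝 0)) (ha : Tendsto Ψ atTop (𝓝 a)) (z : ℝ) :
    energy γ W Ψ z = -W a := by
  have hconst : ∀ y, energy γ W Ψ y = energy γ W Ψ z := fun y =>
    is_const_of_deriv_eq_zero (fun y => (hasDerivAt_energy hW hΨ heq y).differentiableAt)
      (fun y => (hasDerivAt_energy hW hΨ heq y).deriv) y z
  have hlim : Tendsto (energy γ W Ψ) atTop (𝓝 (γ / 2 * 0 ^ 2 - W a)) :=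
    ((hd.pow 2).const_mul _).sub ((hW.continuous.tendsto a).comp ha)
  simpa using tendsto_nhds_unique (tendsto_const_nhds.congr fun y => (hconst y).symm) hlim

namespace Real

theorem hasDerivAt_tanh (x : ℝ) : HasDerivAt tanh (1 - tanh x ^ 2) x := by
  have h := (hasDerivAt_sinh x).div (hasDerivAt_cosh x) (cosh_pos x).ne'
  rw [show tanh = sinh / cosh from funext tanh_eq_sinh_div_cosh]
  refine h.congr_deriv ?_
  rw [Pi.div_apply]
  field_simp

end Real

section Profile

variable {c : ℝ} {Ψ : ℝ → ℝ}

theorem eq_of_hasDerivAt_eq_mul_one_sub_sq {u v : ℝ → ℝ}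
    (hu : ∀ z, HasDerivAt u (c * (1 - u z ^ 2)) z) (hv : ∀ z, HasDerivAt v (c * (1 - v z ^ 2)) z)
    {z₀ : ℝ} (h₀ : u z₀ = v z₀) : u = v := by
  have hcont : Continuous fun z => |c| * |u z + v z| := by
    have := continuous_iff_continuousAt.mpr fun z => (hu z).continuousAt
    have := continuous_iff_continuousAt.mpr fun z => (hv z).continuousAt
    fun_prop
  have := eq_zero_of_norm_deriv_le_mul_norm (fun z => (hu z).sub (hv z)) hcont
    (fun z => by
      rw [Real.norm_eq_abs, Real.norm_eq_abs, ← abs_mul, ← abs_mul]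
      exact (abs_eq_abs.mpr (Or.inr (by simp only [Pi.sub_apply]; ring))).le)
    (x₀ := z₀) (sub_eq_zero.mpr h₀)
  exact funext fun z => sub_eq_zero.mp (congrFun this z)

theorem ne_of_sq_deriv_eq (hsq : ∀ z, deriv Ψ z ^ 2 = (c * (1 - Ψ z ^ 2)) ^ 2)
    (hp : Tendsto Ψ atTop (𝓝 1)) (hm : Tendsto Ψ atBot (𝓝 (-1))) (hΨ : Differentiable ℝ Ψ)
    {s : ℝ} (hs : s ^ 2 = 1) (z : ℝ) : Ψ z ≠ s := by
  intro hz
  have hcont : Continuous fun z => |c| * |Ψ z + s| := by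
    have := hΨ.continuous
    fun_prop
  have hzero := eq_zero_of_norm_deriv_le_mul_norm (fun z => (hΨ z).hasDerivAt.sub_const s)
    hcont (fun z => by
      rw [Real.norm_eq_abs, Real.norm_eq_abs, (sq_eq_sq_iff_abs_eq_abs _ _).mp (hsq z),
        ← abs_mul, ← abs_mul, ← hs]
      exact (abs_eq_abs.mpr (Or.inr (by ring))).le) (sub_eq_zero.mpr hz)
  have hΨs : Ψ = fun _ => s := funext fun z => sub_eq_zero.mp (congrFun hzero z)
  rw [hΨs, tendsto_const_nhds_iff] at hp hm
  norm_num [hp] at hm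

theorem abs_lt_one_of_sq_deriv_eq (hsq : ∀ z, deriv Ψ z ^ 2 = (c * (1 - Ψ z ^ 2)) ^ 2)
    (hp : Tendsto Ψ atTop (𝓝 1)) (hm : Tendsto Ψ atBot (𝓝 (-1))) (hΨ : Differentiable ℝ Ψ) (z : ℝ) :
    |Ψ z| < 1 := by
  have hne : ∀ s : ℝ, s ^ 2 = 1 → ∀ z, Ψ z ≠ s := fun _ => ne_of_sq_deriv_eq hsq hp hm hΨ
  refine abs_lt.mpr ⟨lt_of_le_of_ne (not_lt.mp fun hz => ?_) (hne _ neg_one_sq z).symm,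
    lt_of_le_of_ne (not_lt.mp fun hz => ?_) (hne _ (one_pow 2) z)⟩
  · obtain ⟨w, hw⟩ := (hp.eventually (lt_mem_nhds (by norm_num : (-1 : ℝ) < 1))).exists
    obtain ⟨y, hy⟩ := mem_range_of_exists_le_of_exists_ge hΨ.continuous ⟨z, hz.le⟩ ⟨w, hw.le⟩
    exact hne _ neg_one_sq y hy
  · obtain ⟨w, hw⟩ := (hm.eventually (gt_mem_nhds (by norm_num : (-1 : ℝ) < 1))).exists
    obtain ⟨y, hy⟩ := mem_range_of_exists_le_of_exists_ge hΨ.continuous ⟨w, hw.le⟩ ⟨z, hz.le⟩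
    exact hne _ (one_pow 2) y hy

theorem deriv_eq_of_sq_deriv_eq (hsq : ∀ z, deriv Ψ z ^ 2 = (c * (1 - Ψ z ^ 2)) ^ 2)
    (hp : Tendsto Ψ atTop (𝓝 1)) (hm : Tendsto Ψ atBot (𝓝 (-1))) (hc : 0 < c) (hΨ : ContDiff ℝ 1 Ψ)
    (z : ℝ) :
    deriv Ψ z = c * (1 - Ψ z ^ 2) := by
  have hΨd := hΨ.differentiable one_ne_zero
  have hpos : ∀ z, 0 < c * (1 - Ψ z ^ 2) := fun z => mul_pos hc <| sub_pos.mpr <|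
    (sq_lt_one_iff_abs_lt_one _).mpr (abs_lt_one_of_sq_deriv_eq hsq hp hm hΨd z)
  have hcont : Continuous fun z => c * (1 - Ψ z ^ 2) := by
    have := hΨd.continuous
    fun_prop
  rcases isPreconnected_univ.eq_or_eq_neg_of_sq_eq (hΨ.continuous_deriv le_rfl).continuousOn
    hcont.continuousOn (fun z _ => hsq z) (fun {z} _ => (hpos z).ne') with h | h
  · exact h (mem_univ z)
  · have hanti : Antitone Ψ := (strictAnti_of_deriv_neg fun z => by
      simpa [h (mem_univ z)] using hpos z).antitone
    have := hanti.le_of_tendsto hp 0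
    have := abs_lt.mp (abs_lt_one_of_sq_deriv_eq hsq hp hm hΨd 0)
    linarith

end Profile

theorem stmt_2_general (γ : ℝ) (hγ : 0 < γ) (W : ℝ → ℝ)
    (hW : W = fun x => (x - 1) ^ 2 * (x + 1) ^ 2)
    (Ψ : ℝ → ℝ) (hΨ : ContDiff ℝ 2 Ψ)
    (heq : ∀ z : ℝ, deriv W (Ψ z) - γ * deriv (deriv Ψ) z = 0)
    (hd0 : Tendsto (deriv Ψ) atTop (nhds 0))
    (hp : Tendsto Ψ atTop (nhds 1)) (hm : Tendsto Ψ atBot (nhds (-1))) :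
    ∃ zbar : ℝ, ∀ z : ℝ, Ψ z = Real.tanh (Real.sqrt (2 / γ) * (z - zbar)) := by
  set c := √(2 / γ)
  have hW_diff : Differentiable ℝ W := by rw [hW]; fun_prop
  have hsq : ∀ z, deriv Ψ z ^ 2 = (c * (1 - Ψ z ^ 2)) ^ 2 := fun z => by
    have h := energy_eq_of_tendsto hW_diff hΨ (fun z => sub_eq_zero.mp (heq z)) hd0 hp z
    simp only [energy, hW] at h
    rw [mul_pow, Real.sq_sqrt (by positivity)]
    field_simp at h ⊢
    linear_combination h
  have hode := deriv_eq_of_sq_deriv_eq hsq hp hm (Real.sqrt_pos.mpr (by positivity))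
    (hΨ.of_le one_le_two)
  obtain ⟨zbar, hzbar⟩ := mem_range_of_exists_le_of_exists_ge hΨ.continuous
    ((hm.eventually (gt_mem_nhds (by norm_num : (-1 : ℝ) < 0))).exists.imp fun _ => le_of_lt)
    ((hp.eventually (lt_mem_nhds (by norm_num : (0 : ℝ) < 1))).exists.imp fun _ => le_of_lt)
  have htanh : ∀ z, HasDerivAt (fun z => Real.tanh (c * (z - zbar)))
      (c * (1 - Real.tanh (c * (z - zbar)) ^ 2)) z := fun z =>
    ((Real.hasDerivAt_tanh _).comp z
      (((hasDerivAt_id' z).sub_const zbar).const_mul c)).congr_deriv (by ring)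
  refine ⟨zbar, congrFun (eq_of_hasDerivAt_eq_mul_one_sub_sq
    (fun z => hode z ▸ ((hΨ.differentiable two_ne_zero) z).hasDerivAt) htanh (z₀ := zbar) ?_)⟩
  simp [hzbar]

/-- classification of heteroclinic profiles. Every `C²` solution of
`W'(Ψ) - γ Ψ'' = 0` with `Ψ' → 0` and `Ψ → ±1` at `±∞` is a translate of the
standing wave `Ψ̄(z) = tanh(√(2/γ) z)`. -/
theorem stmt_2 (γ : ℝ) (hγ : 0 < γ) (W : ℝ → ℝ)
    (hW : W = fun x => (x - 1) ^ 2 * (x + 1) ^ 2)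
    (Ψ : ℝ → ℝ) (hΨ : ContDiff ℝ 2 Ψ)
    (heq : ∀ z : ℝ, deriv W (Ψ z) - γ * deriv (deriv Ψ) z = 0)
    (hd0 : Tendsto (deriv Ψ) atTop (nhds 0)) (hd0' : Tendsto (deriv Ψ) atBot (nhds 0))
    (hp : Tendsto Ψ atTop (nhds 1)) (hm : Tendsto Ψ atBot (nhds (-1))) :
    ∃ zbar : ℝ, ∀ z : ℝ, Ψ z = Real.tanh (Real.sqrt (2 / γ) * (z - zbar)) :=
  stmt_2_general γ hγ W hW Ψ hΨ heq hd0 hp hm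
end

section
/- Let γ > 0 and W(x) = (x−1)²(x+1)². If Ψ : ℝ → ℝ is a twice continuously differentiable solution of W'(Ψ) − γ Ψ'' = 0 on ℝ with Ψ'(z) → 0 as z → ±∞ and Ψ(z) → ±1 as z → ±∞, then −1 < Ψ(z) < 1 for all z ∈ ℝ and Ψ satisfies the first-order quadrature equation Ψ'(z) = √(2/γ)·(1 − Ψ(z)²) for all z ∈ ℝ. -/
open Filter Real

/-!
Multiplying the equation by `Ψ'` shows that the energy `γ/2 Ψ'² - W(Ψ)` is constant; it vanishes
at `+∞`, so `Ψ'² = (2/γ) (1 - Ψ²)²`. Then `v = 1 - Ψ²` satisfies `|v'| ≤ 2 √(2/γ) |Ψ| |v|`, so by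
Grönwall `v` vanishes nowhere unless `Ψ' ≡ 0`, which the distinct limits `±1` exclude; by the
intermediate value theorem `Ψ` therefore stays in `(-1, 1)`. Finally `Ψ'` and `√(2/γ) (1 - Ψ²)` are
continuous with equal squares and the latter never vanishes, so on the connected line they agree
up to a global sign, and the minus sign would make `Ψ` decreasing.
-/

open Set Topology

section Energy

variable {γ : ℝ} {V V' Ψ Ψ' Ψ'' : ℝ → ℝ}

theorem hasDerivAt_energy_s3 (hV : ∀ x, HasDerivAt V (V' x) x) (hΨ : ∀ z, HasDerivAt Ψ (Ψ' z) z)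
    (hΨ' : ∀ z, HasDerivAt Ψ' (Ψ'' z) z) (heq : ∀ z, γ * Ψ'' z = V' (Ψ z)) (z : ℝ) :
    HasDerivAt (fun z => γ / 2 * Ψ' z ^ 2 - V (Ψ z)) 0 z := by
  refine ((((hΨ' z).pow 2).const_mul (γ / 2)).sub ((hV (Ψ z)).comp z (hΨ z))).congr_deriv ?_
  linear_combination Ψ' z * heq z

theorem half_mul_sq_eq_sub_of_tendsto (hV : ∀ x, HasDerivAt V (V' x) x)
    (hΨ : ∀ z, HasDerivAt Ψ (Ψ' z) z) (hΨ' : ∀ z, HasDerivAt Ψ' (Ψ'' z) z)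
    (heq : ∀ z, γ * Ψ'' z = V' (Ψ z)) {L : ℝ} (hΨ'0 : Tendsto Ψ' atTop (𝓝 0))
    (hL : Tendsto Ψ atTop (𝓝 L)) (z : ℝ) :
    γ / 2 * Ψ' z ^ 2 = V (Ψ z) - V L := by
  set E : ℝ → ℝ := fun z => γ / 2 * Ψ' z ^ 2 - V (Ψ z)
  have hE := hasDerivAt_energy_s3 hV hΨ hΨ' heq
  have hconst : ∀ t, E t = E z := fun t =>
    is_const_of_deriv_eq_zero (fun x => (hE x).differentiableAt) (fun x => (hE x).deriv) t z
  have hlim : Tendsto E atTop (𝓝 (γ / 2 * 0 ^ 2 - V L)) :=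
    ((hΨ'0.pow 2).const_mul _).sub (((hV L).continuousAt.tendsto).comp hL)
  have hEz : E z = γ / 2 * 0 ^ 2 - V L :=
    tendsto_nhds_unique (tendsto_const_nhds.congr fun t => (hconst t).symm) hlim
  simp only [E] at hEz
  linarith

end Energy

section Gronwall

variable {v v' k : ℝ → ℝ} {a : ℝ}

theorem eq_zero_of_abs_deriv_le_mul_abs_of_le (hk : Continuous k)
    (hv : ∀ x, HasDerivAt v (v' x) x) (hb : ∀ x, |v' x| ≤ k x * |v x|) (ha : v a = 0)
    {b : ℝ} (hab : a ≤ b) : v b = 0 := by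
  obtain ⟨K, hK⟩ := isCompact_Icc.exists_bound_of_continuousOn (hk.continuousOn (s := Icc a b))
  refine eq_zero_of_abs_deriv_le_mul_abs_self_of_eq_zero_right (K := K)
    (fun x _ => (hv x).continuousAt.continuousWithinAt) (fun x _ => (hv x).hasDerivWithinAt) ha
    (fun x hx => ?_) b ⟨hab, le_rfl⟩
  calc ‖v' x‖ ≤ k x * |v x| := hb x
    _ ≤ K * ‖v x‖ :=
      mul_le_mul_of_nonneg_right ((le_abs_self _).trans (hK x (Ico_subset_Icc_self hx)))
        (abs_nonneg _)

theorem eq_zero_of_abs_deriv_le_mul_abs (hk : Continuous k)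
    (hv : ∀ x, HasDerivAt v (v' x) x) (hb : ∀ x, |v' x| ≤ k x * |v x|) (ha : v a = 0)
    (x : ℝ) : v x = 0 := by
  rcases le_total a x with hax | hxa
  · exact eq_zero_of_abs_deriv_le_mul_abs_of_le hk hv hb ha hax
  · have hrev : ∀ t, HasDerivAt (fun t => v (-t)) (-v' (-t)) t := fun t => by
      simpa [Function.comp_def] using (hv (-t)).comp t (hasDerivAt_neg t)
    simpa using eq_zero_of_abs_deriv_le_mul_abs_of_le (hk.comp continuous_neg) hrev
      (fun t => by simpa using hb (-t)) (by simpa using ha) (neg_le_neg hxa)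

end Gronwall

theorem lt_of_continuous_of_forall_ne {f : ℝ → ℝ} (hf : Continuous f) {c a : ℝ} (ha : f a < c)
    (hne : ∀ z, f z ≠ c) (z : ℝ) : f z < c := by
  by_contra! hz
  obtain ⟨y, hy⟩ := intermediate_value_univ a z hf ⟨ha.le, hz⟩
  exact hne y hy

section Quadrature

variable {Ψ : ℝ → ℝ} {c : ℝ}

theorem deriv_eq_zero_of_sq_eq_one (hΨ : Differentiable ℝ Ψ)
    (hsq : ∀ z, deriv Ψ z ^ 2 = (c * (1 - Ψ z ^ 2)) ^ 2) {a : ℝ} (ha : Ψ a ^ 2 = 1)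
    (z : ℝ) : deriv Ψ z = 0 := by
  have hv : ∀ x, HasDerivAt (fun x => 1 - Ψ x ^ 2) (-(2 * Ψ x * deriv Ψ x)) x := fun x => by
    simpa using (((hΨ x).hasDerivAt).pow 2).const_sub 1
  have hb : ∀ x, |-(2 * Ψ x * deriv Ψ x)| ≤ 2 * |c| * |Ψ x| * |1 - Ψ x ^ 2| := fun x => by
    rw [abs_neg, abs_mul, abs_mul, (sq_eq_sq_iff_abs_eq_abs _ _).mp (hsq x), abs_mul, abs_two]
    linarith
  have h0 := eq_zero_of_abs_deriv_le_mul_abs (continuous_const.mul hΨ.continuous.abs) hv hb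
    (sub_eq_zero.2 ha.symm) z
  simpa [h0] using hsq z

theorem neg_one_lt_and_lt_one_of_sq_ne_one (hΨ : Continuous Ψ) (hp : Tendsto Ψ atTop (𝓝 1))
    (hm : Tendsto Ψ atBot (𝓝 (-1))) (hne : ∀ z, Ψ z ^ 2 ≠ 1) (z : ℝ) : -1 < Ψ z ∧ Ψ z < 1 := by
  obtain ⟨a, ha⟩ := (hm.eventually (gt_mem_nhds (by norm_num : (-1 : ℝ) < 1))).exists
  obtain ⟨b, hb⟩ := (hp.eventually (lt_mem_nhds (by norm_num : (-1 : ℝ) < 1))).exists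
  have hlow := lt_of_continuous_of_forall_ne (f := fun z => -Ψ z) hΨ.neg (c := 1) (a := b)
    (by linarith) (fun z h => hne z (by rw [show Ψ z = -1 by linarith]; norm_num)) z
  exact ⟨by linarith,
    lt_of_continuous_of_forall_ne hΨ ha (fun z h => hne z (by rw [h]; norm_num)) z⟩

theorem not_antitone_of_tendsto {a b : ℝ} (hm : Tendsto Ψ atBot (𝓝 a))
    (hp : Tendsto Ψ atTop (𝓝 b)) (hab : a < b) : ¬ Antitone Ψ := fun h => by
  have hb : b ≤ Ψ 0 := le_of_tendsto hp (eventually_atTop.2 ⟨0, fun _ hz => h hz⟩)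
  have ha : Ψ 0 ≤ a := ge_of_tendsto hm (eventually_atBot.2 ⟨0, fun _ hz => h hz⟩)
  linarith

theorem deriv_eq_of_sq_deriv_eq_s3 {g : ℝ → ℝ} (hΨ : Differentiable ℝ Ψ)
    (hΨ' : Continuous (deriv Ψ)) (hg : Continuous g) (hg0 : ∀ z, 0 < g z)
    (hsq : ∀ z, deriv Ψ z ^ 2 = g z ^ 2) (hanti : ¬ Antitone Ψ) (z : ℝ) : deriv Ψ z = g z := by
  rcases isPreconnected_univ.eq_or_eq_neg_of_sq_eq hΨ'.continuousOn hg.continuousOn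
    (fun x _ => hsq x) (fun _ => (hg0 _).ne') with h | h
  · exact h (mem_univ z)
  · refine absurd (antitone_of_deriv_nonpos hΨ fun x => ?_) hanti
    simp [h (mem_univ x), (hg0 x).le]

end Quadrature

theorem stmt_3_general (γ : ℝ) (hγ : 0 < γ) (W : ℝ → ℝ)
    (hW : W = fun x => (x - 1) ^ 2 * (x + 1) ^ 2)
    (Ψ : ℝ → ℝ) (hΨ : ContDiff ℝ 2 Ψ)
    (heq : ∀ z : ℝ, deriv W (Ψ z) - γ * deriv (deriv Ψ) z = 0)
    (hd0 : Tendsto (deriv Ψ) atTop (nhds 0))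
    (hp : Tendsto Ψ atTop (nhds 1)) (hm : Tendsto Ψ atBot (nhds (-1))) :
    ∀ z : ℝ, (-1 < Ψ z ∧ Ψ z < 1) ∧
      deriv Ψ z = Real.sqrt (2 / γ) * (1 - (Ψ z) ^ 2) := by
  have hΨd : Differentiable ℝ Ψ := hΨ.differentiable (by norm_num)
  have hWd : Differentiable ℝ W := by subst hW; fun_prop
  set c := √(2 / γ)
  have hsq : ∀ z, deriv Ψ z ^ 2 = (c * (1 - Ψ z ^ 2)) ^ 2 := fun z => by
    have h := half_mul_sq_eq_sub_of_tendsto (fun x => (hWd x).hasDerivAt)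
      (fun z => (hΨd z).hasDerivAt) (fun z => (hΨ.differentiable_deriv_two z).hasDerivAt)
      (fun z => by linarith [heq z]) hd0 hp z
    rw [hW] at h
    rw [mul_pow, sq_sqrt (by positivity)]
    field_simp at h ⊢
    linarith
  have hne : ∀ a, Ψ a ^ 2 ≠ 1 := fun a ha => by
    have hconst : ∀ z, Ψ z = Ψ 0 := fun z =>
      is_const_of_deriv_eq_zero hΨd (deriv_eq_zero_of_sq_eq_one hΨd hsq ha) z 0
    rw [funext hconst, tendsto_const_nhds_iff] at hp hm
    linarith
  have hbound := neg_one_lt_and_lt_one_of_sq_ne_one hΨd.continuous hp hm hne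
  have hderiv := deriv_eq_of_sq_deriv_eq_s3 hΨd (hΨ.continuous_deriv (by norm_num))
    (by fun_prop) (fun z => mul_pos (sqrt_pos.2 (by positivity)) (by nlinarith [hbound z]))
    hsq (not_antitone_of_tendsto hm hp (by norm_num))
  exact fun z => ⟨hbound z, hderiv z⟩

/-- Any `C²` heteroclinic solution of `W'(Ψ) - γ Ψ'' = 0` with
`Ψ' → 0`, `Ψ → ±1` at `±∞` stays strictly between `-1` and `1` and satisfies
the first-order quadrature equation `Ψ' = √(2/γ) (1 - Ψ²)`. -/
theorem stmt_3 (γ : ℝ) (hγ : 0 < γ) (W : ℝ → ℝ)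
    (hW : W = fun x => (x - 1) ^ 2 * (x + 1) ^ 2)
    (Ψ : ℝ → ℝ) (hΨ : ContDiff ℝ 2 Ψ)
    (heq : ∀ z : ℝ, deriv W (Ψ z) - γ * deriv (deriv Ψ) z = 0)
    (hd0 : Tendsto (deriv Ψ) atTop (nhds 0)) (hd0' : Tendsto (deriv Ψ) atBot (nhds 0))
    (hp : Tendsto Ψ atTop (nhds 1)) (hm : Tendsto Ψ atBot (nhds (-1))) :
    ∀ z : ℝ, (-1 < Ψ z ∧ Ψ z < 1) ∧
      deriv Ψ z = Real.sqrt (2 / γ) * (1 - (Ψ z) ^ 2) :=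
  stmt_3_general γ hγ W hW Ψ hΨ heq hd0 hp hm
end

section
/- Fix N ≥ 2, positive atomic masses m₁, …, m_N > 0, constants K > 0 (bulk modulus), n^R > 0 (reference number density), p^R ∈ ℝ (reference pressure), θ > 0 (the product kT of Boltzmann constant and temperature), and reference energies ψ₁^R, …, ψ_N^R ∈ ℝ. Define on the open positive orthant (0,∞)^N the free energy function F(ρ₁,…,ρ_N) = Σ_α ρ_α ψ_α^R + (K − p^R)(1 − n/n^R) + K·(n/n^R)·ln(n/n^R) + θ·Σ_α n_α ln(n_α/n), where n_α = ρ_α/m_α and n = Σ_α n_α. Then F is strictly convex on (0,∞)^N. -/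
/-!
In the reduced number densities `u_α = n_α / n^R`, with total `U = Σ u_α`, the free energy is an
affine function plus `K U log U + θ n^R Σ u_α log (u_α / U)`. The second term is convex by the
log-sum inequality, i.e. convexity of the perspective `(p, s) ↦ p log (p / s)` of `x log x`.
Along a segment on which `U` varies, `U log U` is strictly convex; along a segment on which `U` is
constant, the second term equals `Σ u_α log u_α - U log U`, and `Σ u_α log u_α` is strictly convex.
-/

open Real Finset Function

theorem convexOn_mul_log_div :
    ConvexOn ℝ (Set.Ioi 0 ×ˢ Set.Ioi 0) fun z : ℝ × ℝ => z.1 * log (z.1 / z.2) := by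
  refine ⟨(convex_Ioi 0).prod (convex_Ioi 0), ?_⟩
  rintro ⟨p, s⟩ ⟨hp, hs⟩ ⟨q, t⟩ ⟨hq, ht⟩ a b ha hb hab
  simp only [Set.mem_Ioi] at hp hs hq ht
  simp only [Prod.smul_mk, Prod.mk_add_mk, smul_eq_mul]
  set D := a * s + b * t
  have hD : 0 < D := convex_Ioi (0 : ℝ) hs ht ha hb hab
  -- Jensen for `x log x` at the points `p / s`, `q / t` with weights `a s / D`, `b t / D`
  have h := convexOn_mul_log.2 (Set.mem_Ici.2 (div_pos hp hs).le) (Set.mem_Ici.2 (div_pos hq ht).le)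
    (div_nonneg (mul_nonneg ha hs.le) hD.le) (div_nonneg (mul_nonneg hb ht.le) hD.le)
    (by rw [← add_div, div_self hD.ne'])
  simp only [smul_eq_mul] at h
  have hmid : a * s / D * (p / s) + b * t / D * (q / t) = (a * p + b * q) / D := by field_simp
  rw [hmid] at h
  calc (a * p + b * q) * log ((a * p + b * q) / D)
      = D * ((a * p + b * q) / D * log ((a * p + b * q) / D)) := by field_simp
    _ ≤ D * (a * s / D * (p / s * log (p / s)) + b * t / D * (q / t * log (q / t))) :=
        mul_le_mul_of_nonneg_left h hD.le
    _ = a * (p * log (p / s)) + b * (q * log (q / t)) := by field_simp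

theorem convex_setOf_forall_pos {ι : Type*} : Convex ℝ {u : ι → ℝ | ∀ i, 0 < u i} :=
  fun _ hx _ hy _ _ ha hb hab i => convex_Ioi (0 : ℝ) (hx i) (hy i) ha hb hab

theorem StrictConvexOn.comp_div_pos {ι : Type*} {f : (ι → ℝ) → ℝ}
    (hf : StrictConvexOn ℝ {u | ∀ i, 0 < u i} f) {w : ι → ℝ} (hw : ∀ i, 0 < w i) :
    StrictConvexOn ℝ {u : ι → ℝ | ∀ i, 0 < u i} fun ρ => f fun i => ρ i / w i := by
  refine ⟨convex_setOf_forall_pos, fun x hx y hy hxy a b ha hb hab => ?_⟩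
  have hxy' : (fun i => x i / w i) ≠ fun i => y i / w i := fun h =>
    hxy <| funext fun i => (div_left_inj' (hw i).ne').1 (congrFun h i)
  convert hf.2 (fun i => div_pos (hx i) (hw i)) (fun i => div_pos (hy i) (hw i)) hxy' ha hb hab
    using 2
  ext i
  simp only [Pi.add_apply, Pi.smul_apply, smul_eq_mul]
  ring

section Orthant

variable {ι : Type*} [Fintype ι]

theorem convexOn_sum_mul_add_const (w : ι → ℝ) (C : ℝ) {s : Set (ι → ℝ)} (hs : Convex ℝ s) :
    ConvexOn ℝ s fun u => ∑ i, u i * w i + C := by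
  refine ⟨hs, fun x _ y _ a b _ _ hab => le_of_eq ?_⟩
  simp only [Pi.add_apply, Pi.smul_apply, smul_eq_mul, add_mul, sum_add_distrib, mul_assoc,
    ← mul_sum]
  linear_combination (-C) * hab

theorem sum_mul_log_div_sum {u : ι → ℝ} (hu : ∀ i, 0 < u i) :
    ∑ i, u i * log (u i / ∑ j, u j) = ∑ i, u i * log (u i) - (∑ i, u i) * log (∑ i, u i) := by
  rw [sum_mul, ← sum_sub_distrib]
  refine sum_congr rfl fun i _ => ?_
  rw [log_div (hu i).ne' (sum_pos' (fun j _ => (hu j).le) ⟨i, mem_univ i, hu i⟩).ne']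
  ring

theorem strictConvexOn_sum_mul_log :
    StrictConvexOn ℝ {u : ι → ℝ | ∀ i, 0 < u i} fun u => ∑ i, u i * log (u i) := by
  refine ⟨convex_setOf_forall_pos, fun x hx y hy hxy a b ha hb hab => ?_⟩
  obtain ⟨i, hi⟩ := Function.ne_iff.mp hxy
  simp only [Pi.add_apply, Pi.smul_apply, smul_eq_mul, mul_sum, ← sum_add_distrib]
  exact sum_lt_sum (fun j _ => convexOn_mul_log.2 (hx j).le (hy j).le ha.le hb.le hab)
    ⟨i, mem_univ i, strictConvexOn_mul_log.2 (hx i).le (hy i).le hi ha hb hab⟩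

theorem convexOn_sum_mul_log_div_sum :
    ConvexOn ℝ {u : ι → ℝ | ∀ i, 0 < u i} fun u => ∑ i, u i * log (u i / ∑ j, u j) := by
  refine ⟨convex_setOf_forall_pos, fun x hx y hy a b ha hb hab => ?_⟩
  have hsum_pos {u : ι → ℝ} (hu : ∀ i, 0 < u i) (i : ι) : 0 < ∑ j, u j :=
    sum_pos' (fun j _ => (hu j).le) ⟨i, mem_univ i, hu i⟩
  simp only [Pi.add_apply, Pi.smul_apply, smul_eq_mul, sum_add_distrib, ← mul_sum]
  calc ∑ i, (a * x i + b * y i) * log ((a * x i + b * y i) / (a * ∑ j, x j + b * ∑ j, y j))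
      ≤ ∑ i, (a * (x i * log (x i / ∑ j, x j)) + b * (y i * log (y i / ∑ j, y j))) :=
        sum_le_sum fun i _ =>
          convexOn_mul_log_div.2 (Set.mk_mem_prod (hx i) (hsum_pos hx i))
            (Set.mk_mem_prod (hy i) (hsum_pos hy i)) ha hb hab
    _ = _ := by rw [sum_add_distrib, ← mul_sum, ← mul_sum]

theorem strictConvexOn_mul_log_sum_add_sum_mul_log_div_sum {c t : ℝ} (hc : 0 < c) (ht : 0 < t) :
    StrictConvexOn ℝ {u : ι → ℝ | ∀ i, 0 < u i} fun u =>
      c * ((∑ i, u i) * log (∑ i, u i)) + t * ∑ i, u i * log (u i / ∑ j, u j) := by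
  refine ⟨convex_setOf_forall_pos, fun x hx y hy hxy a b ha hb hab => ?_⟩
  have hsum : ∑ i, (a • x + b • y) i = a * ∑ i, x i + b * ∑ i, y i := by
    simp only [Pi.add_apply, Pi.smul_apply, smul_eq_mul, sum_add_distrib, ← mul_sum]
  by_cases hxy_sum : ∑ i, x i = ∑ i, y i
  · have hz : ∀ i, 0 < (a • x + b • y) i := convex_setOf_forall_pos hx hy ha.le hb.le hab
    have h := strictConvexOn_sum_mul_log.2 hx hy hxy ha hb hab
    simp only [smul_eq_mul] at h ⊢
    rw [sum_mul_log_div_sum hx, sum_mul_log_div_sum hy, sum_mul_log_div_sum hz, hsum, ← hxy_sum,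
      ← add_mul, hab, one_mul]
    linear_combination t * h + (t - c) * ((∑ i, x i) * log (∑ i, x i)) * hab
  · have hc_strict := strictConvexOn_mul_log.2 (sum_nonneg fun i _ => (hx i).le)
      (sum_nonneg fun i _ => (hy i).le) hxy_sum ha hb hab
    have ht_conv := convexOn_sum_mul_log_div_sum.2 hx hy ha.le hb.le hab
    simp only [smul_eq_mul] at hc_strict ht_conv ⊢
    rw [hsum] at ht_conv ⊢
    linear_combination c * hc_strict + t * ht_conv

end Orthant

theorem stmt_13_general (N : ℕ) (m : Fin N → ℝ) (hm : ∀ α : Fin N, 0 < m α)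
    (K nR θ : ℝ) (hK : 0 < K) (hnR : 0 < nR) (hθ : 0 < θ)
    (pR : ℝ) (ψR : Fin N → ℝ) (F : (Fin N → ℝ) → ℝ)
    (hF : ∀ ρ : Fin N → ℝ, F ρ =
      (∑ α, ρ α * ψR α)
      + (K - pR) * (1 - (∑ α, ρ α / m α) / nR)
      + K * ((∑ α, ρ α / m α) / nR) * Real.log ((∑ α, ρ α / m α) / nR)
      + θ * ∑ α, (ρ α / m α) * Real.log ((ρ α / m α) / (∑ β, ρ β / m β))) :
    StrictConvexOn ℝ {ρ : Fin N → ℝ | ∀ α, 0 < ρ α} F := by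
  have hG := ((strictConvexOn_mul_log_sum_add_sum_mul_log_div_sum hK (mul_pos hθ hnR)).add_convexOn
    (convexOn_sum_mul_add_const (fun α => nR * m α * ψR α - (K - pR)) (K - pR)
      convex_setOf_forall_pos)).comp_div_pos (w := fun α => m α * nR) fun α => mul_pos (hm α) hnR
  refine hG.congr fun ρ _ => ?_
  simp only [Pi.add_apply, ← div_div, hF, ← sum_div]
  have hentropy : θ * nR * ∑ α, ρ α / m α / nR * log (ρ α / m α / nR / ((∑ α, ρ α / m α) / nR)) =
      θ * ∑ α, ρ α / m α * log (ρ α / m α / ∑ β, ρ β / m β) := by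
    rw [mul_assoc, mul_sum]
    congr 1
    refine sum_congr rfl fun α _ => ?_
    rw [div_div_div_cancel_right₀ hnR.ne']
    field_simp
  have haffine : ∑ α, ρ α / m α / nR * (nR * m α * ψR α - (K - pR)) =
      ∑ α, ρ α * ψR α - (K - pR) * ((∑ α, ρ α / m α) / nR) := by
    rw [mul_comm (K - pR), sum_div, sum_mul, ← sum_sub_distrib]
    refine sum_congr rfl fun α _ => ?_
    field_simp [(hm α).ne']
  rw [hentropy, haffine]
  ring

/-- The pure-phase free energy
`F(ρ) = Σ ρ_α ψ_α^R + (K - p^R)(1 - n/n^R) + K (n/n^R) ln(n/n^R) + θ Σ n_α ln(n_α/n)`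
with `n_α = ρ_α/m_α`, `n = Σ n_α`, is strictly convex on the positive orthant. -/
theorem stmt_13 (N : ℕ) (hN : 2 ≤ N) (m : Fin N → ℝ) (hm : ∀ α : Fin N, 0 < m α)
    (K nR θ : ℝ) (hK : 0 < K) (hnR : 0 < nR) (hθ : 0 < θ)
    (pR : ℝ) (ψR : Fin N → ℝ) (F : (Fin N → ℝ) → ℝ)
    (hF : ∀ ρ : Fin N → ℝ, F ρ =
      (∑ α, ρ α * ψR α)
      + (K - pR) * (1 - (∑ α, ρ α / m α) / nR)
      + K * ((∑ α, ρ α / m α) / nR) * Real.log ((∑ α, ρ α / m α) / nR)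
      + θ * ∑ α, (ρ α / m α) * Real.log ((ρ α / m α) / (∑ β, ρ β / m β))) :
    StrictConvexOn ℝ {ρ : Fin N → ℝ | ∀ α, 0 < ρ α} F :=
  stmt_13_general N m hm K nR θ hK hnR hθ pR ψR F hF
end

section
/- Let γ > 0, W(x) = (x−1)²(x+1)², and X₀(z) = tanh(√(2/γ)·z). If Ξ : ℝ → ℝ is twice continuously differentiable, bounded on ℝ, and satisfies W'(X₀(z))·Ξ'(z) + γ·(X₀'·Ξ')'(z) = 0 for all z ∈ ℝ, then Ξ is constant. -/
open Real

/-!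
With `k = √(2/γ)`, the profile derivative `φ = X₀' = k (1 - X₀²)` satisfies `γ φ' = W'(X₀)`,
so the equation for `u = Ξ'` becomes `2 φ' u + φ u' = 0`, i.e. `(φ² u)' = 0`. Hence
`u = c / φ²` with `0 < φ ≤ k`, so `c Ξ' ≥ c² / k²`; a bounded `Ξ` forces `c = 0`.
-/

theorem HasDerivAt.tanh {f : ℝ → ℝ} {f' x : ℝ} (hf : HasDerivAt f f' x) :
    HasDerivAt (fun y => Real.tanh (f y)) ((1 - Real.tanh (f x) ^ 2) * f') x := by
  have h := hf.sinh.div hf.cosh (cosh_pos (f x)).ne'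
  rw [show (fun y => Real.tanh (f y)) = fun y => Real.sinh (f y) / Real.cosh (f y) from
    funext fun y => Real.tanh_eq_sinh_div_cosh _]
  refine h.congr_deriv ?_
  rw [Real.tanh_eq_sinh_div_cosh]
  field_simp

theorem not_bounded_of_le_deriv {f : ℝ → ℝ} {ε : ℝ} (hf : Differentiable ℝ f) (hε : 0 < ε)
    (hf' : ∀ x, ε ≤ deriv f x) : ¬ ∃ C, ∀ x, |f x| ≤ C := by
  rintro ⟨C, hC⟩
  have hmono : Monotone fun x => f x - ε * x := by
    have hd (x : ℝ) : HasDerivAt (fun x => f x - ε * x) (deriv f x - ε) x := by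
      exact (hf x).hasDerivAt.sub (by simpa using (hasDerivAt_id x).const_mul ε)
    exact monotone_of_deriv_nonneg (fun x => (hd x).differentiableAt)
      fun x => (hd x).deriv ▸ sub_nonneg.mpr (hf' x)
  set T := (2 * C + 1) / ε
  have hT : 0 ≤ T := div_nonneg (by linarith [(abs_nonneg _).trans (hC 0)]) hε.le
  have hεT : ε * T = 2 * C + 1 := mul_div_cancel₀ _ hε.ne'
  have := hmono hT
  simp only [mul_zero, sub_zero] at this
  linarith [abs_le.mp (hC 0), abs_le.mp (hC T)]

theorem deriv_eq_zero_of_bounded_of_deriv_mul_sq_eq {f φ : ℝ → ℝ} {M c : ℝ}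
    (hf : Differentiable ℝ f) (hb : ∃ C, ∀ x, |f x| ≤ C) (hφ : ∀ x, 0 < φ x)
    (hφM : ∀ x, φ x ≤ M) (hc : ∀ x, deriv f x * φ x ^ 2 = c) (x : ℝ) : deriv f x = 0 := by
  suffices c = 0 by
    simpa [(hφ x).ne', this] using hc x
  by_contra hc0
  have hM : 0 < M := (hφ 0).trans_le (hφM 0)
  refine not_bounded_of_le_deriv (hf.const_mul c) (by positivity : 0 < c ^ 2 / M ^ 2)
    (fun x => ?_) ?_
  · have hφx := hφ x
    have : c * deriv f x = c ^ 2 / φ x ^ 2 := by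
      rw [eq_div_iff (by positivity), ← hc x]; ring
    simp only [deriv_const_mul_field']
    rw [this]
    gcongr
    exact hφM x
  · obtain ⟨C, hC⟩ := hb
    exact ⟨|c| * C, fun x => by rw [abs_mul]; exact mul_le_mul_of_nonneg_left (hC x) (abs_nonneg c)⟩

theorem mul_sq_eq_of_two_mul_deriv_add_mul_deriv_eq_zero {φ φ' u : ℝ → ℝ}
    (hφ : ∀ x, HasDerivAt φ (φ' x) x) (hu : Differentiable ℝ u)
    (h : ∀ x, 2 * φ' x * u x + φ x * deriv u x = 0) (x : ℝ) :
    u x * φ x ^ 2 = u 0 * φ 0 ^ 2 := by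
  have hd (x : ℝ) : HasDerivAt (fun x => u x * φ x ^ 2) 0 x := by
    refine ((hu x).hasDerivAt.mul ((hφ x).fun_pow 2)).congr_deriv ?_
    linear_combination φ x * h x
  exact is_const_of_deriv_eq_zero (fun x => (hd x).differentiableAt) (fun x => (hd x).deriv) x 0

theorem exists_eq_const_of_bounded_of_two_mul_deriv_add_mul_deriv_eq_zero {f φ φ' : ℝ → ℝ}
    {M : ℝ} (hf : Differentiable ℝ f) (hf' : Differentiable ℝ (deriv f))
    (hb : ∃ C, ∀ x, |f x| ≤ C) (hφ : ∀ x, HasDerivAt φ (φ' x) x) (hφ_pos : ∀ x, 0 < φ x)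
    (hφM : ∀ x, φ x ≤ M) (h : ∀ x, 2 * φ' x * deriv f x + φ x * deriv (deriv f) x = 0) :
    ∃ c, ∀ x, f x = c :=
  ⟨f 0, fun x => is_const_of_deriv_eq_zero hf
    (deriv_eq_zero_of_bounded_of_deriv_mul_sq_eq hf hb hφ_pos hφM
      (mul_sq_eq_of_two_mul_deriv_add_mul_deriv_eq_zero hφ hf' h)) x 0⟩

/-- kernel of the adjoint of the linearized Allen–Cahn operator.
If `Ξ` is `C²`, bounded, and solves `W'(X₀) Ξ' + γ (X₀' Ξ')' = 0` on `ℝ`, where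
`X₀(z) = tanh(√(2/γ) z)` and `W(x) = (x-1)²(x+1)²`, then `Ξ` is constant. -/
theorem stmt_18 (γ : ℝ) (hγ : 0 < γ) (W X₀ : ℝ → ℝ)
    (hW : W = fun x => (x - 1) ^ 2 * (x + 1) ^ 2)
    (hX : X₀ = fun z => Real.tanh (Real.sqrt (2 / γ) * z))
    (Ξ : ℝ → ℝ) (hΞ : ContDiff ℝ 2 Ξ) (hb : ∃ C : ℝ, ∀ z : ℝ, |Ξ z| ≤ C)
    (heq : ∀ z : ℝ,
      deriv W (X₀ z) * deriv Ξ z + γ * deriv (fun w => deriv X₀ w * deriv Ξ w) z = 0) :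
    ∃ c : ℝ, ∀ z : ℝ, Ξ z = c := by
  subst hW hX
  set k := √(2 / γ)
  have hk : 0 < k := sqrt_pos.mpr (by positivity)
  have hγk : γ * k ^ 2 = 2 := by rw [sq_sqrt (by positivity)]; field_simp
  set φ : ℝ → ℝ := fun z => k * (1 - tanh (k * z) ^ 2)
  have hX₀ (z : ℝ) : HasDerivAt (fun z => tanh (k * z)) (φ z) z := by
    simpa [φ, mul_comm] using ((hasDerivAt_id z).const_mul k).tanh
  have hφ (z : ℝ) :
      HasDerivAt φ (-2 * k ^ 2 * tanh (k * z) * (1 - tanh (k * z) ^ 2)) z := by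
    refine (((hX₀ z).fun_pow 2).const_sub 1 |>.const_mul k).congr_deriv ?_
    ring
  have hW (x : ℝ) : deriv (fun x => (x - 1) ^ 2 * (x + 1) ^ 2) x = 4 * x ^ 3 - 4 * x := by
    refine ((((hasDerivAt_id x).sub_const 1).fun_pow 2).mul
      (((hasDerivAt_id x).add_const 1).fun_pow 2)).deriv.trans ?_
    simp only [id, Nat.cast_ofNat]
    ring
  have hu := hΞ.differentiable_deriv_two
  refine exists_eq_const_of_bounded_of_two_mul_deriv_add_mul_deriv_eq_zero (M := k)
    (hΞ.differentiable two_ne_zero) hu hb hφ (fun z => ?_) (fun z => ?_) (fun z => ?_)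
  · exact mul_pos hk (sub_pos.mpr (tanh_sq_lt_one _))
  · exact mul_le_of_le_one_right hk.le (sub_le_self _ (sq_nonneg _))
  · -- `γ φ' = W'(X₀)` because `γ k² = 2`
    have h := heq z
    rw [hW, funext fun w => (hX₀ w).deriv, ((hφ z).fun_mul (hu z).hasDerivAt).deriv] at h
    refine (mul_eq_zero.mp ?_).resolve_left hγ.ne'
    linear_combination h - 2 * deriv Ξ z * tanh (k * z) * (1 - tanh (k * z) ^ 2) * hγk
end
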